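/- Let Ω ⊂ ℝᵈ be bounded open, and let a^{ij}, b^i, c¹ ∈ L^∞(Ω) with ‖a^{ij}‖_∞, ‖b^i‖_∞, ‖c¹‖_∞ ≤ Λ₁. Assume the symmetric a^{ij} satisfy ellipticity and the Cordès condition with parameter ε ∈ (0,1], let θ = (Σᵢa^{ii})/(Σ_{i,j}(a^{ij})²), let A > 0 satisfy ‖w‖_{H²} ≤ (1/A)‖Δw‖_{L²} for all w ∈ H²(Ω)∩H₀¹(Ω), and set C_m = max{‖θ‖_∞ maxᵢ‖bⁱ‖_∞ √d, ‖θ‖_∞‖c¹‖_∞}. If 1 − √(1−ε)/A − C_m/A > 0, then any u ∈ H²(Ω) ∩ H₀¹(Ω) with L₁u := Σ_{i,j}a^{ij}∂ᵢ∂ⱼu + Σᵢ bⁱ∂ᵢu + c¹u = 0 a.e. satisfies u = 0. -/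

import Mathlib

open MeasureTheory

/-- First-order partial derivative `∂u/∂xᵢ`. -/
noncomputable def pderiv1 {d : ℕ} (u : EuclideanSpace ℝ (Fin d) → ℝ) (i : Fin d)
    (x : EuclideanSpace ℝ (Fin d)) : ℝ :=
  fderiv ℝ u x (EuclideanSpace.single i 1)

/-- Second-order partial derivative `∂²u/∂xᵢ∂xⱼ`. -/
noncomputable def pderiv2 {d : ℕ} (u : EuclideanSpace ℝ (Fin d) → ℝ) (i j : Fin d)
    (x : EuclideanSpace ℝ (Fin d)) : ℝ :=
  pderiv1 (pderiv1 u j) i x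

/-- The Laplacian `Δu = Σᵢ ∂²u/∂xᵢ²`. -/
noncomputable def lap {d : ℕ} (u : EuclideanSpace ℝ (Fin d) → ℝ)
    (x : EuclideanSpace ℝ (Fin d)) : ℝ :=
  ∑ i, pderiv2 u i i x

/-- `L²(Ω)` norm. -/
noncomputable def L2norm {d : ℕ} (Ω : Set (EuclideanSpace ℝ (Fin d)))
    (f : EuclideanSpace ℝ (Fin d) → ℝ) : ℝ :=
  Real.sqrt (∫ x in Ω, (f x) ^ 2)

/-- `L²(Ω)` norm of the gradient. -/
noncomputable def gradL2norm {d : ℕ} (Ω : Set (EuclideanSpace ℝ (Fin d)))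
    (u : EuclideanSpace ℝ (Fin d) → ℝ) : ℝ :=
  Real.sqrt (∫ x in Ω, ∑ i, (pderiv1 u i x) ^ 2)

/-- The `H²(Ω)` norm. -/
noncomputable def H2norm {d : ℕ} (Ω : Set (EuclideanSpace ℝ (Fin d)))
    (u : EuclideanSpace ℝ (Fin d) → ℝ) : ℝ :=
  L2norm Ω u + gradL2norm Ω u + ∑ i, ∑ j, L2norm Ω (pderiv2 u i j)

/-!
With `θ = tr a / |a|²`, the Cordès condition is exactly the statement that `θ a - I` has Frobenius
norm at most `√(1 - ε)`. Writing `Δu = θ (a : D²u) - (θ a - I) : D²u` and substituting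
`a : D²u = -(b · ∇u + c¹ u)` from `L₁u = 0` bounds `|Δu|` pointwise by
`√(1 - ε) |D²u| + C_m (|∇u| + |u|)`. Taking `L²(Ω)` norms and using `‖u‖_{H²} ≤ ‖Δu‖ / A` gives
`(1 - √(1 - ε)/A - C_m/A) ‖Δu‖ ≤ 0`, so `‖Δu‖ = 0`, hence `‖u‖ = 0`, and the continuous `u`
vanishes on the open set `Ω`.
-/

open Finset Bornology

lemma abs_sum_mul_le_sqrt_mul_sqrt {ι : Type*} (s : Finset ι) (f g : ι → ℝ) :
    |∑ i ∈ s, f i * g i| ≤ √(∑ i ∈ s, f i ^ 2) * √(∑ i ∈ s, g i ^ 2) :=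
  (Real.abs_le_sqrt (sum_mul_sq_le_sq_mul_sq s f g)).trans_eq
    (Real.sqrt_mul (sum_nonneg fun _ _ => sq_nonneg _) _)

lemma sqrt_sum_sum_sq_le_sum_sum_abs {ι κ : Type*} (s : Finset ι) (t : Finset κ)
    (f : ι → κ → ℝ) : √(∑ i ∈ s, ∑ j ∈ t, f i j ^ 2) ≤ ∑ i ∈ s, ∑ j ∈ t, |f i j| := by
  refine Real.sqrt_le_iff.2 ⟨sum_nonneg fun _ _ => sum_nonneg fun _ _ => abs_nonneg _, ?_⟩
  calc ∑ i ∈ s, ∑ j ∈ t, f i j ^ 2 = ∑ i ∈ s, ∑ j ∈ t, |f i j| ^ 2 := by simp only [sq_abs]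
    _ ≤ ∑ i ∈ s, (∑ j ∈ t, |f i j|) ^ 2 :=
      sum_le_sum fun i _ => sum_sq_le_sq_sum_of_nonneg fun _ _ => abs_nonneg _
    _ ≤ (∑ i ∈ s, ∑ j ∈ t, |f i j|) ^ 2 :=
      sum_sq_le_sq_sum_of_nonneg fun _ _ => sum_nonneg fun _ _ => abs_nonneg _

lemma abs_sum_mul_le_of_abs_le {ι : Type*} [Fintype ι] {b : ι → ℝ} {B : ℝ}
    (hb : ∀ i, |b i| ≤ B) (g : ι → ℝ) :
    |∑ i, b i * g i| ≤ B * √(Fintype.card ι) * √(∑ i, g i ^ 2) := by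
  rcases isEmpty_or_nonempty ι with hι | ⟨⟨i₀⟩⟩
  · simp
  have hB : 0 ≤ B := (abs_nonneg _).trans (hb i₀)
  have hb2 : ∑ i, b i ^ 2 ≤ Fintype.card ι * B ^ 2 := by
    calc ∑ i, b i ^ 2 ≤ ∑ _i : ι, B ^ 2 :=
          sum_le_sum fun i _ => sq_le_sq' (abs_le.1 (hb i)).1 (abs_le.1 (hb i)).2
      _ = Fintype.card ι * B ^ 2 := by simp
  calc |∑ i, b i * g i| ≤ √(∑ i, b i ^ 2) * √(∑ i, g i ^ 2) := abs_sum_mul_le_sqrt_mul_sqrt _ _ _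
    _ ≤ √(Fintype.card ι * B ^ 2) * √(∑ i, g i ^ 2) := by gcongr
    _ = B * √(Fintype.card ι) * √(∑ i, g i ^ 2) := by
      rw [Real.sqrt_mul (Nat.cast_nonneg _), Real.sqrt_sq hB, mul_comm B]

lemma le_diag_of_le_quadratic_form {ι : Type*} [Fintype ι] [DecidableEq ι]
    {A : ι → ι → ℝ} {lam : ℝ}
    (h : ∀ η : ι → ℝ, lam * ∑ i, η i ^ 2 ≤ ∑ i, ∑ j, A i j * η i * η j) (k : ι) :
    lam ≤ A k k := by
  simpa [Pi.single_apply] using h (Pi.single k 1)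

section Cordes

variable {ι : Type*} [Fintype ι]

noncomputable def cordesWeight (A : ι → ι → ℝ) : ℝ :=
  (∑ i, A i i) / ∑ i, ∑ j, A i j ^ 2

variable {A : ι → ι → ℝ}

lemma sum_sum_sq_pos_of_trace_ne_zero (ht : ∑ i, A i i ≠ 0) : 0 < ∑ i, ∑ j, A i j ^ 2 := by
  obtain ⟨k, -, hk⟩ := exists_ne_zero_of_sum_ne_zero ht
  calc 0 < A k k ^ 2 := by positivity
    _ ≤ ∑ j, A k j ^ 2 :=
      single_le_sum (f := fun j => A k j ^ 2) (fun _ _ => sq_nonneg _) (mem_univ k)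
    _ ≤ ∑ i, ∑ j, A i j ^ 2 :=
      single_le_sum (f := fun i => ∑ j, A i j ^ 2) (fun _ _ => sum_nonneg fun _ _ => sq_nonneg _)
        (mem_univ k)

variable [DecidableEq ι]

lemma sum_sq_cordesWeight_mul_sub_one (ht : ∑ i, A i i ≠ 0) :
    ∑ i, ∑ j, (cordesWeight A * A i j - if i = j then 1 else 0) ^ 2
      = Fintype.card ι - (∑ i, A i i) ^ 2 / ∑ i, ∑ j, A i j ^ 2 := by
  have hS := (sum_sum_sq_pos_of_trace_ne_zero ht).ne'
  have expand : ∀ i j, (cordesWeight A * A i j - if i = j then 1 else 0) ^ 2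
      = cordesWeight A ^ 2 * A i j ^ 2
        - 2 * cordesWeight A * (if i = j then A i j else 0) + (if i = j then 1 else 0) := by
    intro i j; split_ifs <;> ring
  simp only [expand, sum_add_distrib, sum_sub_distrib, ← mul_sum, sum_ite_eq, mem_univ,
    if_true, sum_const, card_univ, nsmul_eq_mul, mul_one]
  unfold cordesWeight
  field_simp
  ring

lemma sum_sq_cordesWeight_mul_sub_one_le {ε : ℝ} (ht : ∑ i, A i i ≠ 0) (hε : 0 < ε)
    (hcordes : (∑ i, ∑ j, A i j ^ 2) / (∑ i, A i i) ^ 2 ≤ 1 / ((Fintype.card ι : ℝ) - 1 + ε)) :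
    ∑ i, ∑ j, (cordesWeight A * A i j - if i = j then 1 else 0) ^ 2 ≤ 1 - ε := by
  obtain ⟨k, -, -⟩ := exists_ne_zero_of_sum_ne_zero ht
  have : Nonempty ι := ⟨k⟩
  have hcard : (1 : ℝ) ≤ Fintype.card ι := by exact_mod_cast Fintype.card_pos
  have hS := sum_sum_sq_pos_of_trace_ne_zero ht
  rw [div_le_div_iff₀ (by positivity) (by linarith), one_mul] at hcordes
  have : (Fintype.card ι : ℝ) - 1 + ε ≤ (∑ i, A i i) ^ 2 / ∑ i, ∑ j, A i j ^ 2 := by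
    rw [le_div_iff₀ hS]; linarith
  rw [sum_sq_cordesWeight_mul_sub_one ht]
  linarith

lemma abs_trace_le_of_cordes {ε : ℝ} (hdiag : ∀ k, 0 < A k k) (hε : 0 < ε)
    (hcordes : (∑ i, ∑ j, A i j ^ 2) / (∑ i, A i i) ^ 2 ≤ 1 / ((Fintype.card ι : ℝ) - 1 + ε))
    (M : ι → ι → ℝ) :
    |∑ i, M i i| ≤ √(1 - ε) * √(∑ i, ∑ j, M i j ^ 2)
      + |cordesWeight A| * |∑ i, ∑ j, A i j * M i j| := by
  rcases isEmpty_or_nonempty ι with hι | ⟨⟨i₀⟩⟩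
  · simp
  have ht : ∑ i, A i i ≠ 0 := (sum_pos (fun k _ => hdiag k) ⟨i₀, mem_univ _⟩).ne'
  set B : ι × ι → ℝ := fun p => cordesWeight A * A p.1 p.2 - if p.1 = p.2 then 1 else 0
  have hsplit : ∑ i, M i i
      = cordesWeight A * ∑ i, ∑ j, A i j * M i j - ∑ p : ι × ι, B p * M p.1 p.2 := by
    simp only [B, Fintype.sum_prod_type, sub_mul, ite_mul, one_mul, zero_mul, sum_sub_distrib,
      sum_ite_eq, mem_univ, if_true, mul_sum, mul_assoc]
    ring
  have hB : √(∑ p : ι × ι, B p ^ 2) ≤ √(1 - ε) := by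
    gcongr
    simpa only [B, Fintype.sum_prod_type] using sum_sq_cordesWeight_mul_sub_one_le ht hε hcordes
  have hM : ∑ p : ι × ι, M p.1 p.2 ^ 2 = ∑ i, ∑ j, M i j ^ 2 := Fintype.sum_prod_type _
  calc |∑ i, M i i|
      ≤ |∑ p : ι × ι, B p * M p.1 p.2| + |cordesWeight A * ∑ i, ∑ j, A i j * M i j| := by
        rw [hsplit]; exact (abs_sub _ _).trans_eq (add_comm _ _)
    _ ≤ √(∑ p : ι × ι, B p ^ 2) * √(∑ i, ∑ j, M i j ^ 2)
        + |cordesWeight A| * |∑ i, ∑ j, A i j * M i j| := by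
        rw [← hM, abs_mul]; gcongr; exact abs_sum_mul_le_sqrt_mul_sqrt _ _ _
    _ ≤ _ := by gcongr

lemma abs_trace_le_of_cordes_of_eq {ε Θ Mb Mc c v : ℝ} {M : ι → ι → ℝ} {b g : ι → ℝ}
    (hdiag : ∀ k, 0 < A k k) (hε : 0 < ε)
    (hcordes : (∑ i, ∑ j, A i j ^ 2) / (∑ i, A i i) ^ 2 ≤ 1 / ((Fintype.card ι : ℝ) - 1 + ε))
    (hΘ : |cordesWeight A| ≤ Θ) (hb : ∀ i, |b i| ≤ Mb) (hc : |c| ≤ Mc)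
    (heq : ∑ i, ∑ j, A i j * M i j + ∑ i, b i * g i + c * v = 0) :
    |∑ i, M i i| ≤ √(1 - ε) * √(∑ i, ∑ j, M i j ^ 2)
      + max (Θ * Mb * √(Fintype.card ι)) (Θ * Mc) * (√(∑ i, g i ^ 2) + |v|) := by
  have hΘ0 : 0 ≤ Θ := (abs_nonneg _).trans hΘ
  have hAM : |∑ i, ∑ j, A i j * M i j| ≤ Mb * √(Fintype.card ι) * √(∑ i, g i ^ 2) + Mc * |v| := by
    rw [show ∑ i, ∑ j, A i j * M i j = -(∑ i, b i * g i + c * v) by linarith, abs_neg]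
    refine (abs_add_le _ _).trans (add_le_add (abs_sum_mul_le_of_abs_le hb g) ?_)
    rw [abs_mul]; gcongr
  refine (abs_trace_le_of_cordes hdiag hε hcordes M).trans (add_le_add le_rfl ?_)
  calc |cordesWeight A| * |∑ i, ∑ j, A i j * M i j|
      ≤ Θ * (Mb * √(Fintype.card ι) * √(∑ i, g i ^ 2) + Mc * |v|) := by gcongr
    _ = Θ * Mb * √(Fintype.card ι) * √(∑ i, g i ^ 2) + Θ * Mc * |v| := by ring
    _ ≤ _ := by
      rw [mul_add]
      gcongr
      · exact le_max_left _ _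
      · exact le_max_right _ _

end Cordes

lemma contDiff_pderiv1 {d : ℕ} {u : EuclideanSpace ℝ (Fin d) → ℝ} (hu : ContDiff ℝ 2 u)
    (i : Fin d) : ContDiff ℝ 1 (pderiv1 u i) :=
  (hu.fderiv_right (by norm_num)).clm_apply contDiff_const

lemma continuous_pderiv2 {d : ℕ} {u : EuclideanSpace ℝ (Fin d) → ℝ} (hu : ContDiff ℝ 2 u)
    (i j : Fin d) : Continuous (pderiv2 u i j) :=
  (((contDiff_pderiv1 hu j).fderiv_right (m := 0) le_rfl).clm_apply contDiff_const).continuous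

section L2norm

variable {d : ℕ} {Ω : Set (EuclideanSpace ℝ (Fin d))} {f g : EuclideanSpace ℝ (Fin d) → ℝ}

lemma memLp_two_of_continuous (hΩ : IsBounded Ω) (hf : Continuous f) :
    MemLp f 2 (volume.restrict Ω) := by
  have := isFiniteMeasure_restrict.2 (hΩ.measure_lt_top (μ := volume)).ne
  obtain ⟨C, hC⟩ := hΩ.isCompact_closure.exists_bound_of_continuousOn hf.continuousOn
  exact MemLp.of_bound hf.aestronglyMeasurable C <|
    ae_mono (Measure.restrict_mono subset_closure le_rfl) <|
      ae_restrict_of_forall_mem isClosed_closure.measurableSet hC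

lemma L2norm_eq_lpNorm (hf : AEStronglyMeasurable f (volume.restrict Ω)) :
    L2norm Ω f = lpNorm f 2 (volume.restrict Ω) := by
  rw [lpNorm_eq_integral_norm_rpow_toReal two_ne_zero ENNReal.ofNat_ne_top hf, L2norm,
    Real.sqrt_eq_rpow]
  norm_num [Real.norm_eq_abs, Real.rpow_two]

lemma L2norm_nonneg : 0 ≤ L2norm Ω f := Real.sqrt_nonneg _

lemma L2norm_mono (hΩ : MeasurableSet Ω) (hg : Integrable (fun x => g x ^ 2) (volume.restrict Ω))
    (h : ∀ x ∈ Ω, |f x| ≤ g x) : L2norm Ω f ≤ L2norm Ω g := by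
  refine Real.sqrt_le_sqrt (integral_mono_of_nonneg (ae_of_all _ fun x => sq_nonneg _) hg ?_)
  refine ae_restrict_of_forall_mem hΩ fun x hx => ?_
  simpa only [sq_abs] using pow_le_pow_left₀ (abs_nonneg _) (h x hx) 2

lemma L2norm_add_le (hf : MemLp f 2 (volume.restrict Ω)) (hg : MemLp g 2 (volume.restrict Ω)) :
    L2norm Ω (fun x => f x + g x) ≤ L2norm Ω f + L2norm Ω g := by
  rw [L2norm_eq_lpNorm hf.1, L2norm_eq_lpNorm hg.1,
    L2norm_eq_lpNorm (f := fun x => f x + g x) (hf.add hg).1]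
  exact lpNorm_add_le hf one_le_two

lemma L2norm_sum_le {ι : Type*} (s : Finset ι) {f : ι → EuclideanSpace ℝ (Fin d) → ℝ}
    (hf : ∀ k ∈ s, MemLp (f k) 2 (volume.restrict Ω)) :
    L2norm Ω (fun x => ∑ k ∈ s, f k x) ≤ ∑ k ∈ s, L2norm Ω (f k) := by
  have hsum := lpNorm_sum_le hf one_le_two
  rw [sum_fn] at hsum
  rw [sum_congr rfl fun k hk => L2norm_eq_lpNorm (hf k hk).1,
    L2norm_eq_lpNorm (by simpa only [sum_fn] using (memLp_finsetSum' s hf).1)]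
  exact hsum

lemma L2norm_const_mul (c : ℝ) (f : EuclideanSpace ℝ (Fin d) → ℝ) :
    L2norm Ω (fun x => c * f x) = |c| * L2norm Ω f := by
  simp only [L2norm, mul_pow, integral_const_mul]
  rw [Real.sqrt_mul (sq_nonneg c), Real.sqrt_sq_eq_abs]

lemma L2norm_abs (f : EuclideanSpace ℝ (Fin d) → ℝ) :
    L2norm Ω (fun x => |f x|) = L2norm Ω f := by
  simp only [L2norm, sq_abs]

lemma gradL2norm_eq_L2norm (u : EuclideanSpace ℝ (Fin d) → ℝ) :
    gradL2norm Ω u = L2norm Ω (fun x => √(∑ i, pderiv1 u i x ^ 2)) := by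
  simp only [gradL2norm, L2norm, Real.sq_sqrt (sum_nonneg fun i _ => sq_nonneg _)]

lemma eqOn_zero_of_L2norm_eq_zero (hΩ : IsOpen Ω) (hf : Continuous f)
    (hf2 : MemLp f 2 (volume.restrict Ω)) (h : L2norm Ω f = 0) : Set.EqOn f 0 Ω := by
  rw [L2norm_eq_lpNorm hf2.1, lpNorm_eq_zero hf2 two_ne_zero] at h
  exact Measure.eqOn_open_of_ae_eq h hΩ hf.continuousOn continuousOn_const

end L2norm

lemma L2norm_le_of_abs_le_derivs {d : ℕ} {Ω : Set (EuclideanSpace ℝ (Fin d))}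
    {f u : EuclideanSpace ℝ (Fin d) → ℝ} (hΩo : IsOpen Ω) (hΩb : IsBounded Ω)
    (hu : ContDiff ℝ 2 u) {s C : ℝ} (hs : 0 ≤ s) (hC : 0 ≤ C)
    (h : ∀ x ∈ Ω, |f x| ≤ s * ∑ i, ∑ j, |pderiv2 u i j x|
      + C * (√(∑ i, pderiv1 u i x ^ 2) + |u x|)) :
    L2norm Ω f ≤ s * ∑ i, ∑ j, L2norm Ω (pderiv2 u i j) + C * (gradL2norm Ω u + L2norm Ω u) := by
  have hD2 : ∀ i j, Continuous fun x => |pderiv2 u i j x| :=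
    fun i j => (continuous_pderiv2 hu i j).abs
  have hD1 : Continuous fun x => √(∑ i, pderiv1 u i x ^ 2) := by
    have := fun i => (contDiff_pderiv1 hu i).continuous
    fun_prop
  have hu0 : Continuous fun x => |u x| := hu.continuous.abs
  have hD2sum : Continuous fun x => ∑ i, ∑ j, |pderiv2 u i j x| := by fun_prop
  calc L2norm Ω f
      ≤ L2norm Ω (fun x => s * ∑ i, ∑ j, |pderiv2 u i j x|
          + C * (√(∑ i, pderiv1 u i x ^ 2) + |u x|)) :=
        L2norm_mono hΩo.measurableSet (memLp_two_of_continuous hΩb (by fun_prop)).integrable_sq h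
    _ ≤ L2norm Ω (fun x => s * ∑ i, ∑ j, |pderiv2 u i j x|)
          + L2norm Ω (fun x => C * (√(∑ i, pderiv1 u i x ^ 2) + |u x|)) :=
        L2norm_add_le (memLp_two_of_continuous hΩb (by fun_prop))
          (memLp_two_of_continuous hΩb (by fun_prop))
    _ = s * L2norm Ω (fun x => ∑ i, ∑ j, |pderiv2 u i j x|)
          + C * L2norm Ω (fun x => √(∑ i, pderiv1 u i x ^ 2) + |u x|) := by
        rw [L2norm_const_mul, L2norm_const_mul, abs_of_nonneg hs, abs_of_nonneg hC]
    _ ≤ s * ∑ i, ∑ j, L2norm Ω (pderiv2 u i j) + C * (gradL2norm Ω u + L2norm Ω u) := by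
        gcongr
        · refine (L2norm_sum_le _ fun i _ => memLp_two_of_continuous hΩb (by fun_prop)).trans ?_
          gcongr with i
          refine (L2norm_sum_le _ fun j _ => memLp_two_of_continuous hΩb (hD2 i j)).trans_eq ?_
          simp only [L2norm_abs]
        · refine (L2norm_add_le (memLp_two_of_continuous hΩb hD1)
            (memLp_two_of_continuous hΩb hu0)).trans_eq ?_
          rw [gradL2norm_eq_L2norm, L2norm_abs]

lemma eq_zero_of_absorption {U G K L s C A : ℝ} (hU : 0 ≤ U) (hG : 0 ≤ G) (hK : 0 ≤ K)
    (hL : 0 ≤ L) (hs : 0 ≤ s) (hC : 0 ≤ C) (hH2 : U + G + K ≤ 1 / A * L)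
    (hlap : L ≤ s * K + C * (G + U)) (hpos : 1 - s / A - C / A > 0) : U = 0 := by
  have hsK : s * K ≤ s * (1 / A * L) := by gcongr; linarith
  have hCGU : C * (G + U) ≤ C * (1 / A * L) := by gcongr; linarith
  have hL' : (1 - s / A - C / A) * L ≤ 0 := by
    linarith [show (1 - s / A - C / A) * L = L - s * (1 / A * L) - C * (1 / A * L) by ring]
  have hL0 : L = 0 := le_antisymm (nonpos_of_mul_nonpos_right hL' hpos) hL
  rw [hL0, mul_zero] at hH2
  linarith

theorem stmt16_general {d : ℕ} (Ω : Set (EuclideanSpace ℝ (Fin d)))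
    (hΩo : IsOpen Ω) (hΩb : Bornology.IsBounded Ω)
    (a : Fin d → Fin d → EuclideanSpace ℝ (Fin d) → ℝ)
    (b : Fin d → EuclideanSpace ℝ (Fin d) → ℝ)
    (c1 : EuclideanSpace ℝ (Fin d) → ℝ)
    (ε : ℝ) (hε : ε ∈ Set.Ioc (0 : ℝ) 1)
    (lam Lam : ℝ) (hlam : 0 < lam)
    (hell : ∀ x ∈ Ω, ∀ η : Fin d → ℝ,
      lam * ∑ i, (η i) ^ 2 ≤ (∑ i, ∑ j, a i j x * η i * η j) ∧
      (∑ i, ∑ j, a i j x * η i * η j) ≤ Lam * ∑ i, (η i) ^ 2)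
    (hcordes : ∀ x ∈ Ω,
      (∑ i, ∑ j, (a i j x) ^ 2) / (∑ i, a i i x) ^ 2 ≤ 1 / ((d : ℝ) - 1 + ε))
    (A : ℝ)
    (hnorm : ∀ w : EuclideanSpace ℝ (Fin d) → ℝ, ContDiff ℝ 2 w →
      (∀ x ∈ frontier Ω, w x = 0) → H2norm Ω w ≤ (1 / A) * L2norm Ω (lap w))
    (Θ Mb Mc : ℝ)
    (hΘ : ∀ x ∈ Ω, |(∑ i, a i i x) / (∑ i, ∑ j, (a i j x) ^ 2)| ≤ Θ)
    (hMb : ∀ i, ∀ x ∈ Ω, |b i x| ≤ Mb)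
    (hMc : ∀ x ∈ Ω, |c1 x| ≤ Mc)
    (hpos : 1 - Real.sqrt (1 - ε) / A -
      max (Θ * Mb * Real.sqrt d) (Θ * Mc) / A > 0)
    (u : EuclideanSpace ℝ (Fin d) → ℝ) (hu : ContDiff ℝ 2 u)
    (hubd : ∀ x ∈ frontier Ω, u x = 0)
    (hL1u : ∀ x ∈ Ω,
      (∑ i, ∑ j, a i j x * pderiv2 u i j x) + (∑ i, b i x * pderiv1 u i x) +
        c1 x * u x = 0) :
    ∀ x ∈ Ω, u x = 0 := by
  intro x₀ hx₀
  set Cm := max (Θ * Mb * √d) (Θ * Mc)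
  have hCm : 0 ≤ Cm := le_max_of_le_right <|
    mul_nonneg ((abs_nonneg _).trans (hΘ x₀ hx₀)) ((abs_nonneg _).trans (hMc x₀ hx₀))
  have hpointwise : ∀ x ∈ Ω, |lap u x| ≤ √(1 - ε) * ∑ i, ∑ j, |pderiv2 u i j x|
      + Cm * (√(∑ i, pderiv1 u i x ^ 2) + |u x|) := by
    intro x hx
    have hdiag k : 0 < a k k x :=
      hlam.trans_le (le_diag_of_le_quadratic_form (fun η => (hell x hx η).1) k)
    have := abs_trace_le_of_cordes_of_eq hdiag hε.1 (by simpa using hcordes x hx) (hΘ x hx)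
      (fun i => hMb i x hx) (hMc x hx) (hL1u x hx)
    rw [Fintype.card_fin] at this
    exact this.trans (by gcongr; exact sqrt_sum_sum_sq_le_sum_sum_abs _ _ _)
  have hlap := L2norm_le_of_abs_le_derivs hΩo hΩb hu (Real.sqrt_nonneg _) hCm hpointwise
  have hK : 0 ≤ ∑ i, ∑ j, L2norm Ω (pderiv2 u i j) :=
    sum_nonneg fun i _ => sum_nonneg fun j _ => L2norm_nonneg
  have hU : L2norm Ω u = 0 := eq_zero_of_absorption L2norm_nonneg (Real.sqrt_nonneg _) hK
    L2norm_nonneg (Real.sqrt_nonneg _) hCm (hnorm u hu hubd) hlap hpos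
  exact eqOn_zero_of_L2norm_eq_zero hΩo hu.continuous (memLp_two_of_continuous hΩb hu.continuous)
    hU hx₀

/-- Definiteness of `u ↦ ‖L₁u‖_{L²(Ω)}` for the full second order operator
`L₁u = Σ a^{ij}∂ᵢ∂ⱼu + Σ bⁱ∂ᵢu + c¹u` with Cordès leading coefficients: if
`1 − √(1−ε)/A − C_m/A > 0` with
`C_m = max{‖θ‖_∞ maxᵢ‖bⁱ‖_∞ √d, ‖θ‖_∞‖c¹‖_∞}`, then `L₁u = 0` in `Ω` and zero
boundary values force `u = 0`. -/
theorem stmt16 {d : ℕ} (Ω : Set (EuclideanSpace ℝ (Fin d)))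
    (hΩo : IsOpen Ω) (hΩb : Bornology.IsBounded Ω)
    (a : Fin d → Fin d → EuclideanSpace ℝ (Fin d) → ℝ)
    (b : Fin d → EuclideanSpace ℝ (Fin d) → ℝ)
    (c1 : EuclideanSpace ℝ (Fin d) → ℝ)
    (Λ₁ : ℝ)
    (hΛa : ∀ i j, ∀ x ∈ Ω, |a i j x| ≤ Λ₁)
    (hΛb : ∀ i, ∀ x ∈ Ω, |b i x| ≤ Λ₁)
    (hΛc : ∀ x ∈ Ω, |c1 x| ≤ Λ₁)
    (hsym : ∀ i j, ∀ x ∈ Ω, a i j x = a j i x)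
    (ε : ℝ) (hε : ε ∈ Set.Ioc (0 : ℝ) 1)
    (lam Lam : ℝ) (hlam : 0 < lam)
    (hell : ∀ x ∈ Ω, ∀ η : Fin d → ℝ,
      lam * ∑ i, (η i) ^ 2 ≤ (∑ i, ∑ j, a i j x * η i * η j) ∧
      (∑ i, ∑ j, a i j x * η i * η j) ≤ Lam * ∑ i, (η i) ^ 2)
    (hcordes : ∀ x ∈ Ω,
      (∑ i, ∑ j, (a i j x) ^ 2) / (∑ i, a i i x) ^ 2 ≤ 1 / ((d : ℝ) - 1 + ε))
    (A : ℝ) (hA : 0 < A)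
    (hnorm : ∀ w : EuclideanSpace ℝ (Fin d) → ℝ, ContDiff ℝ 2 w →
      (∀ x ∈ frontier Ω, w x = 0) → H2norm Ω w ≤ (1 / A) * L2norm Ω (lap w))
    (Θ Mb Mc : ℝ)
    (hΘ : ∀ x ∈ Ω, |(∑ i, a i i x) / (∑ i, ∑ j, (a i j x) ^ 2)| ≤ Θ)
    (hMb : ∀ i, ∀ x ∈ Ω, |b i x| ≤ Mb)
    (hMc : ∀ x ∈ Ω, |c1 x| ≤ Mc)
    (hpos : 1 - Real.sqrt (1 - ε) / A -
      max (Θ * Mb * Real.sqrt d) (Θ * Mc) / A > 0)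
    (u : EuclideanSpace ℝ (Fin d) → ℝ) (hu : ContDiff ℝ 2 u)
    (hubd : ∀ x ∈ frontier Ω, u x = 0)
    (hL1u : ∀ x ∈ Ω,
      (∑ i, ∑ j, a i j x * pderiv2 u i j x) + (∑ i, b i x * pderiv1 u i x) +
        c1 x * u x = 0) :
    ∀ x ∈ Ω, u x = 0 :=
  stmt16_general Ω hΩo hΩb a b c1 ε hε lam Lam hlam hell hcordes A hnorm Θ Mb Mc hΘ hMb hMc hpos u
    hu hubd hL1u
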